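/- arXiv:1602.02946 — 2 statements merged into one kernel-verified Lean document; each statement's English description precedes it below -/
import Mathlib

section
/- Let μ be a swap-invariant Borel measure on S¹×S¹ with null slices. Let x₁,x₂,x₃,x₄ ∈ S¹ be pairwise distinct points arranged in strict counterclockwise cyclic order, and assume that the four values μ(L(x₁,x₃)), μ(L(x₄,x₂)), μ(L(x₂,x₃)), μ(L(x₁,x₄)) are all finite. Let E := {x₁} ∪ Arc(x₁,x₂) ∪ {x₂} be the closed arc from x₁ to x₂ and F := {x₃} ∪ Arc(x₃,x₄) ∪ {x₄} the closed arc from x₃ to x₄ (both traversed counterclockwise). Then μ(E×F) = ½ · ( μ(L(x₁,x₃)) + μ(L(x₄,x₂)) − μ(L(x₂,x₃)) − μ(L(x₁,x₄)) ). -/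
open MeasureTheory Set

noncomputable section

local instance : Fact (0 < 2 * Real.pi) := ⟨by positivity⟩

/-- The representative of a point of the circle `S¹ = ℝ/2πℤ` in the interval `(0, 2π]`. -/
def circleRep (x : AddCircle (2 * Real.pi)) : ℝ :=
  (AddCircle.equivIoc (2 * Real.pi) 0 x : ℝ)

/-- The open arc of points traversed when moving counterclockwise from `a` to `b`
(for `a ≠ b`): those `x` whose angular distance from `a` is smaller than that of `b`. -/
def Arc (a b : AddCircle (2 * Real.pi)) : Set (AddCircle (2 * Real.pi)) :=
  {x | circleRep (x - a) < circleRep (b - a)}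

/-- The ordered linking set `L(a,b) := Arc(a,b) × Arc(b,a) ⊆ S¹ × S¹`. -/
def LinkSet (a b : AddCircle (2 * Real.pi)) :
    Set (AddCircle (2 * Real.pi) × AddCircle (2 * Real.pi)) :=
  (Arc a b) ×ˢ (Arc b a)

/-!
Cut the circle at `x₁, x₂, x₃, x₄` into the open arcs `A = (x₁,x₂)`, `B = (x₂,x₃)`,
`C = (x₃,x₄)`, `D = (x₄,x₁)`. Because μ has null slices the cut points are negligible, so up to
null sets `E × F = A × C`, `L(x₁,x₃) = (A ∪ B) × (C ∪ D)`, `L(x₄,x₂) = (D ∪ A) × (B ∪ C)`,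
`L(x₂,x₃) = B × (C ∪ D ∪ A)` and `L(x₁,x₄) = (A ∪ B ∪ C) × D`, all unions disjoint. Expanding,
`μ L(x₁,x₃) + μ L(x₄,x₂) - μ L(x₂,x₃) - μ L(x₁,x₄)` is `2 μ(A × C)` plus the differences
`μ(D × B) - μ(B × D)`, `μ(D × C) - μ(C × D)` and `μ(A × B) - μ(B × A)`, which vanish by
swap invariance.
-/

open Real

local notation "𝕊" => AddCircle (2 * π)

lemma circleRep_mem (x : 𝕊) : circleRep x ∈ Ioc 0 (2 * π) := by
  simpa [circleRep] using (AddCircle.equivIoc (2 * π) 0 x).2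

lemma coe_circleRep (x : 𝕊) : ((circleRep x : ℝ) : 𝕊) = x :=
  (AddCircle.equivIoc (2 * π) 0).symm_apply_apply x

lemma circleRep_injective : Function.Injective circleRep :=
  Function.LeftInverse.injective coe_circleRep

lemma circleRep_coe {r : ℝ} (h : r ∈ Ioc 0 (2 * π)) : circleRep (r : 𝕊) = r :=
  (toIocMod_eq_self _).mpr (by simpa using h)

lemma circleRep_zero : circleRep (0 : 𝕊) = 2 * π := by
  rw [← AddCircle.coe_period]
  exact circleRep_coe ⟨by positivity, le_rfl⟩

lemma circleRep_lt_two_pi {x : 𝕊} (hx : x ≠ 0) : circleRep x < 2 * π :=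
  (circleRep_mem x).2.lt_of_ne fun h => hx (circleRep_injective (h.trans circleRep_zero.symm))

lemma circleRep_sub (x y : 𝕊) :
    circleRep (x - y) = circleRep x - circleRep y + if circleRep y < circleRep x then 0 else 2 * π := by
  obtain ⟨hx₀, hx⟩ := circleRep_mem x
  obtain ⟨hy₀, hy⟩ := circleRep_mem y
  conv_lhs => rw [← coe_circleRep x, ← coe_circleRep y, ← AddCircle.coe_sub]
  split_ifs with h
  · rw [add_zero]
    exact circleRep_coe ⟨by linarith, by linarith⟩
  · rw [← AddCircle.coe_add_period (2 * π) (circleRep x - circleRep y)]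
    exact circleRep_coe ⟨by linarith, by linarith⟩

lemma circleRep_sub_sub (a b c : 𝕊) :
    circleRep (c - b) = circleRep (c - a) - circleRep (b - a) +
      if circleRep (b - a) < circleRep (c - a) then 0 else 2 * π := by
  rw [← circleRep_sub, sub_sub_sub_cancel_right]

section Arc

variable {a b c : 𝕊}

lemma mem_Arc {x : 𝕊} : x ∈ Arc a b ↔ circleRep (x - a) < circleRep (b - a) := Iff.rfl

lemma measurableSet_Arc (a b : 𝕊) : MeasurableSet (Arc a b) :=
  measurableSet_lt ((AddCircle.measurableEquivIoc (2 * π) 0).measurable.subtype_val.comp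
    (measurable_id.sub_const a)) measurable_const

-- The hypothesis says that `a, b, c` lie in counterclockwise order, where `c = a` is allowed.
lemma mem_Arc_iff_of_lt (h : circleRep (b - a) < circleRep (c - a)) {x : 𝕊} :
    x ∈ Arc b c ↔ circleRep (b - a) < circleRep (x - a) ∧ circleRep (x - a) < circleRep (c - a) := by
  show circleRep (x - b) < circleRep (c - b) ↔ _
  obtain ⟨hx, -⟩ := circleRep_mem (x - a)
  obtain ⟨-, hc⟩ := circleRep_mem (c - a)
  rw [circleRep_sub_sub a b x, circleRep_sub_sub a b c, if_pos h]
  split_ifs with hbx <;> constructor <;> intro <;> first | constructor <;> linarith | linarith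

lemma Arc_eq_insert_union (h : circleRep (b - a) < circleRep (c - a)) :
    Arc a c = insert b (Arc a b ∪ Arc b c) := by
  ext x
  have hxb : x = b ↔ circleRep (x - a) = circleRep (b - a) :=
    ⟨fun h => h ▸ rfl, fun h => sub_left_injective (circleRep_injective h)⟩
  rw [mem_insert_iff, mem_union, mem_Arc_iff_of_lt h, hxb, mem_Arc, mem_Arc]
  rcases lt_trichotomy (circleRep (x - a)) (circleRep (b - a)) with hlt | heq | hgt
  · simp only [hlt, true_or, or_true, iff_true]
    exact hlt.trans h
  · simp only [heq, h, true_or]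
  · simp only [hgt, true_and, hgt.ne', hgt.not_gt, false_or]

lemma disjoint_Arc_of_lt (h : circleRep (b - a) < circleRep (c - a)) :
    Disjoint (Arc a b) (Arc b c) :=
  disjoint_left.2 fun _ hab hbc => (mem_Arc_iff_of_lt h).1 hbc |>.1.not_gt hab

lemma Arc_ae_eq_union {ν : Measure 𝕊} [NullSingletonClass ν]
    (h : circleRep (b - a) < circleRep (c - a)) : Arc a c =ᵐ[ν] (Arc a b ∪ Arc b c : Set 𝕊) := by
  rw [Arc_eq_insert_union h]
  exact insert_ae_eq_self b _

end Arc

section ProdMeasure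

variable {α β : Type*} [MeasurableSpace α] [MeasurableSpace β] {μ : Measure (α × β)}

lemma measure_prod_congr {S S' : Set α} {T T' : Set β} (hS : S =ᵐ[μ.fst] S')
    (hT : T =ᵐ[μ.snd] T') : μ (S ×ˢ T) = μ (S' ×ˢ T') :=
  measure_congr ((ae_eq_comp measurable_fst.aemeasurable hS).inter
    (ae_eq_comp measurable_snd.aemeasurable hT))

lemma nullSingletonClass_fst [MeasurableSingletonClass α]
    (h : ∀ a : α, μ ({a} ×ˢ univ) = 0) : NullSingletonClass μ.fst :=
  ⟨fun a => by rw [Measure.fst_apply (measurableSet_singleton a), ← prod_univ, h]⟩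

lemma nullSingletonClass_snd [MeasurableSingletonClass β]
    (h : ∀ b : β, μ (univ ×ˢ {b}) = 0) : NullSingletonClass μ.snd :=
  ⟨fun b => by rw [Measure.snd_apply (measurableSet_singleton b), ← univ_prod, h]⟩

lemma singleton_union_union_singleton_ae_eq {ν : Measure α} [NullSingletonClass ν] (a b : α)
    (s : Set α) : ({a} ∪ s ∪ {b} : Set α) =ᵐ[ν] s := by
  rw [singleton_union, union_singleton]
  exact (insert_ae_eq_self b _).trans (insert_ae_eq_self a s)

lemma measure_prod_comm_of_map_swap {μ : Measure (α × α)} (hswap : μ.map Prod.swap = μ)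
    (S T : Set α) : μ (S ×ˢ T) = μ (T ×ˢ S) :=
  calc μ (S ×ˢ T) = μ (MeasurableEquiv.prodComm ⁻¹' (T ×ˢ S)) :=
        congrArg μ (preimage_swap_prod T S).symm
    _ = μ.map Prod.swap (T ×ˢ S) := (MeasurableEquiv.prodComm.map_apply _).symm
    _ = μ (T ×ˢ S) := by rw [hswap]

end ProdMeasure

section ArcSplitting

variable {β : Type*} [MeasurableSpace β] {a b c : 𝕊}

lemma measure_Arc_prod {μ : Measure (𝕊 × β)} [NullSingletonClass μ.fst]
    (h : circleRep (b - a) < circleRep (c - a)) {T : Set β} (hT : MeasurableSet T) :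
    μ (Arc a c ×ˢ T) = μ (Arc a b ×ˢ T) + μ (Arc b c ×ˢ T) := by
  rw [measure_prod_congr (Arc_ae_eq_union h) (ae_eq_refl T),
    union_prod, measure_union (disjoint_prod.2 (Or.inl (disjoint_Arc_of_lt h)))
      ((measurableSet_Arc b c).prod hT)]

lemma measure_prod_Arc {μ : Measure (β × 𝕊)} [NullSingletonClass μ.snd]
    (h : circleRep (b - a) < circleRep (c - a)) {S : Set β} (hS : MeasurableSet S) :
    μ (S ×ˢ Arc a c) = μ (S ×ˢ Arc a b) + μ (S ×ˢ Arc b c) := by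
  rw [measure_prod_congr (ae_eq_refl S) (Arc_ae_eq_union h),
    prod_union, measure_union (disjoint_prod.2 (Or.inr (disjoint_Arc_of_lt h)))
      (hS.prod (measurableSet_Arc b c))]

end ArcSplitting

lemma ENNReal.toReal_eq_half_of_add_eq {a b c d e : ENNReal} (ha : a ≠ ⊤) (hb : b ≠ ⊤)
    (h : a + b = 2 * c + d + e) : c.toReal = 1 / 2 * (a.toReal + b.toReal - d.toReal - e.toReal) := by
  have hfin : 2 * c + d + e ≠ ⊤ := h ▸ ENNReal.add_ne_top.2 ⟨ha, hb⟩
  obtain ⟨⟨h2c, hd⟩, he⟩ := ENNReal.add_ne_top.1 hfin |>.imp_left ENNReal.add_ne_top.1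
  have hreal := congrArg ENNReal.toReal h
  rw [ENNReal.toReal_add ha hb, ENNReal.toReal_add (ENNReal.add_ne_top.2 ⟨h2c, hd⟩) he,
    ENNReal.toReal_add h2c hd, ENNReal.toReal_mul, ENNReal.toReal_ofNat] at hreal
  linarith

lemma measure_linkSet_add_linkSet_eq {μ : Measure (𝕊 × 𝕊)} [NullSingletonClass μ.fst]
    [NullSingletonClass μ.snd] (hswap : μ.map Prod.swap = μ) {x₁ x₂ x₃ x₄ : 𝕊} (h14 : x₁ ≠ x₄)
    (h123 : circleRep (x₂ - x₁) < circleRep (x₃ - x₁))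
    (h134 : circleRep (x₃ - x₁) < circleRep (x₄ - x₁)) :
    μ (LinkSet x₁ x₃) + μ (LinkSet x₄ x₂) =
      2 * μ (Arc x₁ x₂ ×ˢ Arc x₃ x₄) + μ (LinkSet x₂ x₃) + μ (LinkSet x₁ x₄) := by
  have h₁ : circleRep (x₁ - x₁) = 2 * π := by rw [sub_self, circleRep_zero]
  have h₂ := (circleRep_mem (x₂ - x₁)).1
  have h₄ : circleRep (x₄ - x₁) < 2 * π := circleRep_lt_two_pi (sub_ne_zero.2 h14.symm)
  have h341 : circleRep (x₄ - x₃) < circleRep (x₁ - x₃) := by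
    rw [circleRep_sub_sub x₁ x₃ x₄, circleRep_sub_sub x₁ x₃ x₁]; split_ifs <;> linarith
  have h412 : circleRep (x₁ - x₄) < circleRep (x₂ - x₄) := by
    rw [circleRep_sub_sub x₁ x₄ x₁, circleRep_sub_sub x₁ x₄ x₂]; split_ifs <;> linarith
  have h234 : circleRep (x₃ - x₂) < circleRep (x₄ - x₂) := by
    rw [circleRep_sub_sub x₁ x₂ x₃, circleRep_sub_sub x₁ x₂ x₄]; split_ifs <;> linarith
  have h312 : circleRep (x₁ - x₃) < circleRep (x₂ - x₃) := by
    rw [circleRep_sub_sub x₁ x₃ x₁, circleRep_sub_sub x₁ x₃ x₂]; split_ifs <;> linarith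
  have hM := measurableSet_Arc
  simp only [LinkSet]
  rw [measure_Arc_prod h123 (hM _ _), measure_prod_Arc h341 (hM _ _),
    measure_prod_Arc h341 (hM _ _), measure_Arc_prod h412 (hM _ _),
    measure_prod_Arc h234 (hM _ _), measure_prod_Arc h234 (hM _ _),
    measure_prod_Arc h312 (hM _ _), measure_prod_Arc h341 (hM _ _),
    measure_Arc_prod h134 (hM _ _), measure_Arc_prod h123 (hM _ _),
    measure_prod_comm_of_map_swap hswap (Arc x₄ x₁) (Arc x₂ x₃),
    measure_prod_comm_of_map_swap hswap (Arc x₄ x₁) (Arc x₃ x₄),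
    measure_prod_comm_of_map_swap hswap (Arc x₂ x₃) (Arc x₁ x₂)]
  ring

theorem four_point_identity_general
    (μ : Measure (AddCircle (2 * Real.pi) × AddCircle (2 * Real.pi)))
    (hswap : μ.map Prod.swap = μ)
    (hslice : ∀ a : AddCircle (2 * Real.pi),
      μ (({a} : Set (AddCircle (2 * Real.pi))) ×ˢ (univ : Set (AddCircle (2 * Real.pi)))) = 0 ∧
      μ ((univ : Set (AddCircle (2 * Real.pi))) ×ˢ ({a} : Set (AddCircle (2 * Real.pi)))) = 0)
    (x₁ x₂ x₃ x₄ : AddCircle (2 * Real.pi))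
    (h14 : x₁ ≠ x₄)
    (horder : circleRep (x₂ - x₁) < circleRep (x₃ - x₁) ∧
      circleRep (x₃ - x₁) < circleRep (x₄ - x₁))
    (hfin13 : μ (LinkSet x₁ x₃) < ⊤) (hfin42 : μ (LinkSet x₄ x₂) < ⊤) :
    (μ (({x₁} ∪ Arc x₁ x₂ ∪ {x₂}) ×ˢ ({x₃} ∪ Arc x₃ x₄ ∪ {x₄}))).toReal =
      (1 / 2) * ((μ (LinkSet x₁ x₃)).toReal + (μ (LinkSet x₄ x₂)).toReal
        - (μ (LinkSet x₂ x₃)).toReal - (μ (LinkSet x₁ x₄)).toReal) := by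
  have := nullSingletonClass_fst fun a => (hslice a).1
  have := nullSingletonClass_snd fun a => (hslice a).2
  rw [measure_prod_congr (singleton_union_union_singleton_ae_eq _ _ _)
    (singleton_union_union_singleton_ae_eq _ _ _)]
  exact ENNReal.toReal_eq_half_of_add_eq hfin13.ne hfin42.ne
    (measure_linkSet_add_linkSet_eq hswap h14 horder.1 horder.2)

/-- The four-point identity from the proof of Lemma 2.7: for a swap-invariant Borel
measure with null slices on `S¹ × S¹` and four pairwise distinct points in strict
counterclockwise cyclic order, the measure of the product of the closed arcs
`E = [x₁,x₂]`, `F = [x₃,x₄]` equals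
`½ (μ(L(x₁,x₃)) + μ(L(x₄,x₂)) − μ(L(x₂,x₃)) − μ(L(x₁,x₄)))`. -/
theorem four_point_identity
    (μ : Measure (AddCircle (2 * Real.pi) × AddCircle (2 * Real.pi)))
    (hswap : μ.map Prod.swap = μ)
    (hslice : ∀ a : AddCircle (2 * Real.pi),
      μ (({a} : Set (AddCircle (2 * Real.pi))) ×ˢ (univ : Set (AddCircle (2 * Real.pi)))) = 0 ∧
      μ ((univ : Set (AddCircle (2 * Real.pi))) ×ˢ ({a} : Set (AddCircle (2 * Real.pi)))) = 0)
    (x₁ x₂ x₃ x₄ : AddCircle (2 * Real.pi))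
    (h12 : x₁ ≠ x₂) (h13 : x₁ ≠ x₃) (h14 : x₁ ≠ x₄)
    (h23 : x₂ ≠ x₃) (h24 : x₂ ≠ x₄) (h34 : x₃ ≠ x₄)
    (horder : circleRep (x₂ - x₁) < circleRep (x₃ - x₁) ∧
      circleRep (x₃ - x₁) < circleRep (x₄ - x₁))
    (hfin13 : μ (LinkSet x₁ x₃) < ⊤) (hfin42 : μ (LinkSet x₄ x₂) < ⊤)
    (hfin23 : μ (LinkSet x₂ x₃) < ⊤) (hfin14 : μ (LinkSet x₁ x₄) < ⊤) :
    (μ (({x₁} ∪ Arc x₁ x₂ ∪ {x₂}) ×ˢ ({x₃} ∪ Arc x₃ x₄ ∪ {x₄}))).toReal =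
      (1 / 2) * ((μ (LinkSet x₁ x₃)).toReal + (μ (LinkSet x₄ x₂)).toReal
        - (μ (LinkSet x₂ x₃)).toReal - (μ (LinkSet x₁ x₄)).toReal) :=
  four_point_identity_general μ hswap hslice x₁ x₂ x₃ x₄ h14 horder hfin13 hfin42
end
end

section
/- Let Θ : [0,π] → [0,π] be a continuous function satisfying: (i) Θ(0) = 0 and Θ(π) = π; (ii) Θ(π−θ) = π − Θ(θ) for all θ ∈ [0,π]; (iii) Θ(θ₁+θ₂) ≥ Θ(θ₁) + Θ(θ₂) for all θ₁, θ₂ ∈ [0,π] with θ₁+θ₂ ∈ [0,π]; and (iv) for every continuous convex function f : [0,π] → ℝ, ∫₀^π f(Θ(θ)) sin(θ) dθ ≤ ∫₀^π f(θ) sin(θ) dθ. Then Θ(θ) = θ for all θ ∈ [0,π]. -/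
/-!
Write `p = ∫ sin Θ(θ) sin θ` and `K = ∫ cos Θ(θ) cos θ` over `[0, π]`. Jensen's inequality for
the convex function `-sin` gives `p ≥ π / 2`. The symmetry makes `∫ cos Θ(θ) sin θ` vanish, so
for fixed `a` the integrals `∫ cos Θ(c) sin (c - a) dc` and `∫ cos (Θ a + Θ b) sin b db` are
`-K sin a` and `-p sin Θ(a)`. Substituting `c = a + b` (modulo `π`, with a sign) and using
super-additivity compares them pointwise, so `p sin Θ(a) ≤ K sin a`; integrating against `sin a`
gives `p² ≤ (π / 2) K`. With `p ≥ π / 2` this forces `∫ cos (Θ θ - θ) = K + p ≥ π`, hence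
`cos (Θ θ - θ) = 1` on `[0, π]`.
-/

open MeasureTheory Set Real

lemma integral_sin_mul_sin_zero_pi : ∫ x in (0 : ℝ)..π, sin x * sin x = π / 2 := by
  simp [← sq, integral_sin_sq]

lemma eq_of_cos_sub_eq_one {x y : ℝ} (hx : x ∈ Icc 0 π) (hy : y ∈ Icc 0 π)
    (h : cos (x - y) = 1) : x = y := by
  have := pi_pos
  have := (cos_eq_one_iff_of_lt_of_lt (by linarith [hx.1, hy.2]) (by linarith [hx.2, hy.1])).1 h
  linarith

lemma eqOn_of_le_of_integral_le {f g : ℝ → ℝ} {a b : ℝ} (hab : a < b)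
    (hf : ContinuousOn f (Icc a b)) (hg : ContinuousOn g (Icc a b))
    (hle : ∀ x ∈ Icc a b, f x ≤ g x) (h : ∫ x in a..b, g x ≤ ∫ x in a..b, f x) :
    EqOn f g (Icc a b) := by
  intro x hx
  by_contra hne
  exact (intervalIntegral.integral_lt_integral_of_continuousOn_of_le_of_exists_lt hab hf hg
    (fun y hy ↦ hle y (Ioc_subset_Icc_self hy)) ⟨x, hx, (hle x hx).lt_of_ne hne⟩).not_ge h

lemma integral_mul_sin_sub {f : ℝ → ℝ} {u v : ℝ} (hf : IntervalIntegrable f volume u v) (t : ℝ) :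
    ∫ x in u..v, f x * sin (x - t) =
      (∫ x in u..v, f x * sin x) * cos t - (∫ x in u..v, f x * cos x) * sin t := by
  simp_rw [sin_sub, mul_sub, ← mul_assoc]
  rw [intervalIntegral.integral_sub, intervalIntegral.integral_mul_const,
    intervalIntegral.integral_mul_const]
  exacts [(hf.mul_continuousOn continuous_sin.continuousOn).mul_const _,
    (hf.mul_continuousOn continuous_cos.continuousOn).mul_const _]

lemma integral_cos_add_mul {g w : ℝ → ℝ} {u v : ℝ} (hg : ContinuousOn g (uIcc u v))
    (hw : ContinuousOn w (uIcc u v)) (s : ℝ) :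
    ∫ x in u..v, cos (s + g x) * w x =
      cos s * (∫ x in u..v, cos (g x) * w x) - sin s * ∫ x in u..v, sin (g x) * w x := by
  simp_rw [cos_add, sub_mul, mul_assoc]
  rw [intervalIntegral.integral_sub, intervalIntegral.integral_const_mul,
    intervalIntegral.integral_const_mul]
  exacts [((continuous_cos.comp_continuousOn hg).mul hw).intervalIntegrable.const_mul _,
    ((continuous_sin.comp_continuousOn hg).mul hw).intervalIntegrable.const_mul _]

-- On `[a, π]` substitute `c = a + b`; on `[0, a]` substitute `c = a + b - π`, where
-- `sin (c - a) = -sin b`.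
lemma integral_mul_sin_sub_le_integral_mul_sin {f g : ℝ → ℝ} (hf : ContinuousOn f (Icc 0 π))
    (hg : ContinuousOn g (Icc 0 π)) {a : ℝ} (ha : a ∈ Icc 0 π)
    (h₁ : ∀ b ∈ Icc 0 (π - a), f (a + b) ≤ g b) (h₂ : ∀ b ∈ Icc (π - a) π, -f (a + b - π) ≤ g b) :
    ∫ c in (0 : ℝ)..π, f c * sin (c - a) ≤ ∫ b in (0 : ℝ)..π, g b * sin b := by
  obtain ⟨ha₀, haπ⟩ := ha
  have hfs : ContinuousOn (fun c ↦ f c * sin (c - a)) (Icc 0 π) := hf.mul (by fun_prop)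
  have hgs : ContinuousOn (fun b ↦ g b * sin b) (Icc 0 π) := hg.mul (by fun_prop)
  have hshift₁ : ∫ c in a..π, f c * sin (c - a) = ∫ b in (0 : ℝ)..(π - a), f (a + b) * sin b := by
    have := intervalIntegral.integral_comp_add_left (fun c ↦ f c * sin (c - a)) a
      (a := 0) (b := π - a)
    simp only [add_sub_cancel_left, add_zero, add_sub_cancel] at this
    exact this.symm
  have hshift₂ : ∫ c in (0 : ℝ)..a, f c * sin (c - a) =
      ∫ b in (π - a)..π, -f (a + b - π) * sin b := by
    have := intervalIntegral.integral_comp_add_right (fun c ↦ f c * sin (c - a)) (a - π)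
      (a := π - a) (b := π)
    rw [show π - a + (a - π) = 0 by ring, show π + (a - π) = a by ring] at this
    rw [← this]
    refine intervalIntegral.integral_congr fun b _ ↦ ?_
    rw [show b + (a - π) - a = b - π by ring, sin_sub_pi, show b + (a - π) = a + b - π by ring]
    ring
  have hmono : ∀ {u v : ℝ} {F : ℝ → ℝ}, 0 ≤ u → u ≤ v → v ≤ π → ContinuousOn F (Icc u v) →
      (∀ b ∈ Icc u v, F b ≤ g b) → ∫ b in u..v, F b * sin b ≤ ∫ b in u..v, g b * sin b :=
    fun hu huv hv hF hFg ↦ intervalIntegral.integral_mono_on huv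
      ((hF.mul (by fun_prop)).intervalIntegrable_of_Icc huv)
      ((hgs.mono (Icc_subset_Icc hu hv)).intervalIntegrable_of_Icc huv)
      fun b hb ↦ mul_le_mul_of_nonneg_right (hFg b hb)
        (sin_nonneg_of_nonneg_of_le_pi (hu.trans hb.1) (hb.2.trans hv))
  have hπa : π - a ≤ π := by linarith
  calc ∫ c in (0 : ℝ)..π, f c * sin (c - a)
      = (∫ c in (0 : ℝ)..a, f c * sin (c - a)) + ∫ c in a..π, f c * sin (c - a) :=
        (intervalIntegral.integral_add_adjacent_intervals
          ((hfs.mono (Icc_subset_Icc_right haπ)).intervalIntegrable_of_Icc ha₀)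
          ((hfs.mono (Icc_subset_Icc_left ha₀)).intervalIntegrable_of_Icc haπ)).symm
    _ = (∫ b in (π - a)..π, -f (a + b - π) * sin b) +
          ∫ b in (0 : ℝ)..(π - a), f (a + b) * sin b := by rw [hshift₁, hshift₂]
    _ ≤ (∫ b in (π - a)..π, g b * sin b) + ∫ b in (0 : ℝ)..(π - a), g b * sin b := by
      gcongr
      · exact hmono (by linarith) hπa le_rfl
          (hf.comp (by fun_prop) fun b hb ↦ ⟨by linarith [hb.1], by linarith [hb.2]⟩).neg h₂
      · exact hmono le_rfl (by linarith) hπa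
          (hf.comp (by fun_prop) fun b hb ↦ ⟨by linarith [hb.1], by linarith [hb.2]⟩) h₁
    _ = ∫ b in (0 : ℝ)..π, g b * sin b := by
      rw [add_comm, intervalIntegral.integral_add_adjacent_intervals
        ((hgs.mono (Icc_subset_Icc_right hπa)).intervalIntegrable_of_Icc (by linarith))
        ((hgs.mono (Icc_subset_Icc_left (by linarith))).intervalIntegrable_of_Icc hπa)]

section

variable {Θ : ℝ → ℝ}

lemma integral_cos_comp_mul_sin_eq_zero (hsym : ∀ θ ∈ Icc (0 : ℝ) π, Θ (π - θ) = π - Θ θ) :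
    ∫ θ in (0 : ℝ)..π, cos (Θ θ) * sin θ = 0 := by
  have hrefl := intervalIntegral.integral_comp_sub_left (fun θ ↦ cos (Θ θ) * sin θ) π
    (a := 0) (b := π)
  rw [sub_zero, sub_self, intervalIntegral.integral_congr (g := fun θ ↦ -(cos (Θ θ) * sin θ)),
    intervalIntegral.integral_neg] at hrefl
  · linarith
  intro θ hθ
  rw [uIcc_of_le pi_pos.le] at hθ
  simp only [hsym θ hθ, cos_pi_sub, sin_pi_sub, neg_mul]

lemma cos_comp_add_le_cos_add (hmaps : MapsTo Θ (Icc 0 π) (Icc 0 π))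
    (hsuper : ∀ θ₁ ∈ Icc (0 : ℝ) π, ∀ θ₂ ∈ Icc (0 : ℝ) π,
      θ₁ + θ₂ ∈ Icc (0 : ℝ) π → Θ θ₁ + Θ θ₂ ≤ Θ (θ₁ + θ₂))
    {a b : ℝ} (ha : a ∈ Icc 0 π) (hb : b ∈ Icc 0 π) (hab : a + b ≤ π) :
    cos (Θ (a + b)) ≤ cos (Θ a + Θ b) := by
  have hab' : a + b ∈ Icc 0 π := ⟨add_nonneg ha.1 hb.1, hab⟩
  exact cos_le_cos_of_nonneg_of_le_pi (add_nonneg (hmaps ha).1 (hmaps hb).1) (hmaps hab').2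
    (hsuper a ha b hb hab')

lemma neg_cos_comp_add_sub_pi_le_cos_add (hmaps : MapsTo Θ (Icc 0 π) (Icc 0 π))
    (hsym : ∀ θ ∈ Icc (0 : ℝ) π, Θ (π - θ) = π - Θ θ)
    (hsuper : ∀ θ₁ ∈ Icc (0 : ℝ) π, ∀ θ₂ ∈ Icc (0 : ℝ) π,
      θ₁ + θ₂ ∈ Icc (0 : ℝ) π → Θ θ₁ + Θ θ₂ ≤ Θ (θ₁ + θ₂))
    {a b : ℝ} (ha : a ∈ Icc 0 π) (hb : b ∈ Icc 0 π) (hab : π ≤ a + b) :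
    -cos (Θ (a + b - π)) ≤ cos (Θ a + Θ b) := by
  have hrefl : ∀ {x}, x ∈ Icc 0 π → π - x ∈ Icc 0 π :=
    fun hx ↦ ⟨by linarith [hx.2], by linarith [hx.1]⟩
  have h := cos_comp_add_le_cos_add hmaps hsuper (hrefl ha) (hrefl hb) (by linarith)
  have hc : a + b - π ∈ Icc 0 π := ⟨by linarith, by linarith [ha.2, hb.2]⟩
  rwa [show π - a + (π - b) = π - (a + b - π) by ring, hsym _ hc, hsym a ha, hsym b hb, cos_pi_sub,
    show π - Θ a + (π - Θ b) = 2 * π - (Θ a + Θ b) by ring, cos_two_pi_sub] at h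

lemma integral_sin_comp_mul_sin_mul_le (hcont : ContinuousOn Θ (Icc 0 π))
    (hmaps : MapsTo Θ (Icc 0 π) (Icc 0 π)) (hsym : ∀ θ ∈ Icc (0 : ℝ) π, Θ (π - θ) = π - Θ θ)
    (hsuper : ∀ θ₁ ∈ Icc (0 : ℝ) π, ∀ θ₂ ∈ Icc (0 : ℝ) π,
      θ₁ + θ₂ ∈ Icc (0 : ℝ) π → Θ θ₁ + Θ θ₂ ≤ Θ (θ₁ + θ₂))
    {a : ℝ} (ha : a ∈ Icc 0 π) :
    (∫ θ in (0 : ℝ)..π, sin (Θ θ) * sin θ) * sin (Θ a) ≤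
      (∫ θ in (0 : ℝ)..π, cos (Θ θ) * cos θ) * sin a := by
  have hcos : ContinuousOn (fun θ ↦ cos (Θ θ)) (Icc 0 π) := continuous_cos.comp_continuousOn hcont
  have h := integral_mul_sin_sub_le_integral_mul_sin (g := fun b ↦ cos (Θ a + Θ b)) hcos
    (continuous_cos.comp_continuousOn (continuousOn_const.add hcont)) ha
    (fun b hb ↦ cos_comp_add_le_cos_add hmaps hsuper ha ⟨hb.1, by linarith [hb.2, ha.1]⟩
      (by linarith [hb.2]))
    (fun b hb ↦ neg_cos_comp_add_sub_pi_le_cos_add hmaps hsym hsuper ha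
      ⟨by linarith [hb.1, ha.2], hb.2⟩ (by linarith [hb.1]))
  rw [integral_mul_sin_sub (hcos.intervalIntegrable_of_Icc pi_pos.le),
    integral_cos_add_mul (by rwa [uIcc_of_le pi_pos.le]) continuous_sin.continuousOn,
    integral_cos_comp_mul_sin_eq_zero hsym] at h
  linarith

lemma sq_integral_sin_comp_mul_sin_le (hcont : ContinuousOn Θ (Icc 0 π))
    (hmaps : MapsTo Θ (Icc 0 π) (Icc 0 π)) (hsym : ∀ θ ∈ Icc (0 : ℝ) π, Θ (π - θ) = π - Θ θ)
    (hsuper : ∀ θ₁ ∈ Icc (0 : ℝ) π, ∀ θ₂ ∈ Icc (0 : ℝ) π,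
      θ₁ + θ₂ ∈ Icc (0 : ℝ) π → Θ θ₁ + Θ θ₂ ≤ Θ (θ₁ + θ₂)) :
    (∫ θ in (0 : ℝ)..π, sin (Θ θ) * sin θ) ^ 2 ≤
      π / 2 * ∫ θ in (0 : ℝ)..π, cos (Θ θ) * cos θ := by
  set p := ∫ θ in (0 : ℝ)..π, sin (Θ θ) * sin θ
  set K := ∫ θ in (0 : ℝ)..π, cos (Θ θ) * cos θ
  have h := intervalIntegral.integral_mono_on pi_pos.le
    (f := fun a ↦ p * (sin (Θ a) * sin a)) (g := fun a ↦ K * (sin a * sin a))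
    (((continuous_sin.comp_continuousOn hcont).mul (by fun_prop)).intervalIntegrable_of_Icc
      pi_pos.le |>.const_mul p)
    ((by fun_prop : Continuous fun a ↦ K * (sin a * sin a)).intervalIntegrable (μ := volume) 0 π)
    fun a ha ↦ by
      simpa only [← mul_assoc] using mul_le_mul_of_nonneg_right
        (integral_sin_comp_mul_sin_mul_le hcont hmaps hsym hsuper ha)
        (sin_nonneg_of_nonneg_of_le_pi ha.1 ha.2)
  rw [intervalIntegral.integral_const_mul, intervalIntegral.integral_const_mul,
    integral_sin_mul_sin_zero_pi] at h
  linarith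

lemma integral_cos_comp_sub (hcont : ContinuousOn Θ (Icc 0 π)) :
    ∫ θ in (0 : ℝ)..π, cos (Θ θ - θ) =
      (∫ θ in (0 : ℝ)..π, cos (Θ θ) * cos θ) + ∫ θ in (0 : ℝ)..π, sin (Θ θ) * sin θ := by
  simp_rw [cos_sub]
  exact intervalIntegral.integral_add
    (((continuous_cos.comp_continuousOn hcont).mul (by fun_prop)).intervalIntegrable_of_Icc
      pi_pos.le)
    (((continuous_sin.comp_continuousOn hcont).mul (by fun_prop)).intervalIntegrable_of_Icc
      pi_pos.le)

end

theorem average_angle_rigidity_general (Θ : ℝ → ℝ)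
    (hcont : ContinuousOn Θ (Set.Icc 0 π))
    (hmaps : Set.MapsTo Θ (Set.Icc 0 π) (Set.Icc 0 π))
    (hsym : ∀ θ ∈ Set.Icc (0 : ℝ) π, Θ (π - θ) = π - Θ θ)
    (hsuper : ∀ θ₁ ∈ Set.Icc (0 : ℝ) π, ∀ θ₂ ∈ Set.Icc (0 : ℝ) π,
      θ₁ + θ₂ ∈ Set.Icc (0 : ℝ) π → Θ θ₁ + Θ θ₂ ≤ Θ (θ₁ + θ₂))
    (hjensen : ∀ f : ℝ → ℝ, ContinuousOn f (Set.Icc 0 π) → ConvexOn ℝ (Set.Icc 0 π) f →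
      ∫ θ in (0 : ℝ)..π, f (Θ θ) * Real.sin θ ≤ ∫ θ in (0 : ℝ)..π, f θ * Real.sin θ) :
    ∀ θ ∈ Set.Icc (0 : ℝ) π, Θ θ = θ := by
  set p := ∫ θ in (0 : ℝ)..π, sin (Θ θ) * sin θ
  set K := ∫ θ in (0 : ℝ)..π, cos (Θ θ) * cos θ
  have hp : π / 2 ≤ p := by
    have h := hjensen (fun x ↦ -sin x) continuous_sin.neg.continuousOn
      strictConcaveOn_sin_Icc.concaveOn.neg
    simp only [neg_mul, intervalIntegral.integral_neg, integral_sin_mul_sin_zero_pi] at h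
    linarith
  have hpK : p ^ 2 ≤ π / 2 * K := sq_integral_sin_comp_mul_sin_le hcont hmaps hsym hsuper
  have hcos : EqOn (fun θ ↦ cos (Θ θ - θ)) 1 (Icc 0 π) := by
    refine eqOn_of_le_of_integral_le pi_pos
      (continuous_cos.comp_continuousOn (hcont.sub continuousOn_id)) continuousOn_const
      (fun θ _ ↦ cos_le_one _) ?_
    rw [integral_cos_comp_sub hcont, Pi.one_def, intervalIntegral.integral_const, sub_zero,
      smul_eq_mul, mul_one]
    -- `K + p ≥ π` since `2 p ^ 2 ≤ π K` and `(2 p - π) (p + π) ≥ 0`.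
    nlinarith [pi_pos, mul_nonneg (by linarith : 0 ≤ 2 * p - π) (by linarith [pi_pos] : 0 ≤ p + π)]
  exact fun θ hθ ↦ eq_of_cos_sub_eq_one (hmaps hθ) hθ (hcos hθ)

/-- Otal's average-angle rigidity lemma (Lemma 8 of Otal's paper), used to conclude the
proof of Theorem 2: a continuous function `Θ : [0,π] → [0,π]` with `Θ(0) = 0`, `Θ(π) = π`,
satisfying the symmetry `Θ(π−θ) = π − Θ(θ)`, the super-additivity
`Θ(θ₁+θ₂) ≥ Θ(θ₁) + Θ(θ₂)`, and such that
`∫₀^π f(Θ(θ)) sin θ dθ ≤ ∫₀^π f(θ) sin θ dθ` for every continuous convex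
`f : [0,π] → ℝ`, is the identity. -/
theorem average_angle_rigidity (Θ : ℝ → ℝ)
    (hcont : ContinuousOn Θ (Set.Icc 0 π))
    (hmaps : Set.MapsTo Θ (Set.Icc 0 π) (Set.Icc 0 π))
    (h0 : Θ 0 = 0) (hpi : Θ π = π)
    (hsym : ∀ θ ∈ Set.Icc (0 : ℝ) π, Θ (π - θ) = π - Θ θ)
    (hsuper : ∀ θ₁ ∈ Set.Icc (0 : ℝ) π, ∀ θ₂ ∈ Set.Icc (0 : ℝ) π,
      θ₁ + θ₂ ∈ Set.Icc (0 : ℝ) π → Θ θ₁ + Θ θ₂ ≤ Θ (θ₁ + θ₂))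
    (hjensen : ∀ f : ℝ → ℝ, ContinuousOn f (Set.Icc 0 π) → ConvexOn ℝ (Set.Icc 0 π) f →
      ∫ θ in (0 : ℝ)..π, f (Θ θ) * Real.sin θ ≤ ∫ θ in (0 : ℝ)..π, f θ * Real.sin θ) :
    ∀ θ ∈ Set.Icc (0 : ℝ) π, Θ θ = θ :=
  average_angle_rigidity_general Θ hcont hmaps hsym hsuper hjensen
end
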